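/- arXiv:2408.16685 — 4 statements merged into one kernel-verified Lean document; each statement's English description precedes it below -/
import Mathlib

section
/- Let A be an associative ring in which 2 is a non-zero-divisor (for instance an algebra over ℚ). Let d, n ∈ A satisfy d² = 0 and ⁅⁅d,n⁆,n⁆ = 0, where ⁅a,b⁆ := ab − ba denotes the ring commutator. Set δ := ⁅d,n⁆ = dn − nd. Then δ² = 0 and δd + dδ = 0. -/
/-- **Brylinski–Koszul mechanism.**  Let `A` be an associative ring in which `2` is a
non-zero-divisor.  Let `d, n ∈ A` satisfy `d² = 0` and `⁅⁅d,n⁆,n⁆ = 0`, where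
`⁅a,b⁆ = a*b - b*a` is the ring commutator.  Set `δ := ⁅d,n⁆ = d*n - n*d`.
Then `δ² = 0` and `δ*d + d*δ = 0`. -/
theorem deformed_differential_squares_to_zero_and_anticommutes
    {A : Type*} [Ring A] (h2 : ∀ a : A, 2 * a = 0 → a = 0)
    (d n : A) (hd : d * d = 0)
    (hn : (d * n - n * d) * n - n * (d * n - n * d) = 0) :
    (d * n - n * d) * (d * n - n * d) = 0 ∧
      (d * n - n * d) * d + d * (d * n - n * d) = 0 := by
  set δ := d * n - n * d with hδ
  have ha : δ * d + d * δ = 0 := by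
    have h : δ * d + d * δ = d * d * n - n * (d * d) := by rw [hδ]; noncomm_ring
    rw [h, hd]; simp
  refine ⟨h2 _ ?_, ha⟩
  have key : 2 * (δ * δ) =
      (δ * d + d * δ) * n - n * (δ * d + d * δ) - d * (δ * n - n * δ) - (δ * n - n * δ) * d := by
    rw [hδ]; noncomm_ring
  rw [ha, hn] at key
  simpa using key
end

section
/- Let X and Y be compact metrizable topological spaces, A ⊆ X and B ⊆ Y closed subsets such that X ∖ A is dense in X, and let f : X → Y be a continuous map with f(X ∖ A) ⊆ Y ∖ B. Then the following are equivalent: (1) the restriction of f to a map X ∖ A → Y ∖ B is proper (preimages of compact sets are compact); (2) A ⊆ f⁻¹(B); (3) f⁻¹(Y ∖ B) ⊆ X ∖ A; (4) for every sequence p : ℕ → X ∖ A that escapes to infinity in X ∖ A (tends to the cocompact filter), the image sequence f ∘ p escapes to infinity in Y ∖ B. -/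
open Filter Topology

/-- **Characterizations of proper morphisms of log manifolds.**
Let `X`, `Y` be compact metrizable spaces, `A ⊆ X` and `B ⊆ Y` closed subsets with
`X ∖ A` dense in `X`, and `f : X → Y` continuous with `f(X ∖ A) ⊆ Y ∖ B`.
Then the following are equivalent for the restriction `g : X ∖ A → Y ∖ B` of `f`:
(1) `g` is proper (preimages of compact sets are compact);
(2) `A ⊆ f⁻¹(B)`;
(3) `f⁻¹(Y ∖ B) ⊆ X ∖ A`;
(4) for every sequence in `X ∖ A` escaping to infinity (tending to the cocompact filter),
    the image sequence escapes to infinity in `Y ∖ B`. -/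
theorem proper_log_morphism_tfae
    {X Y : Type*} [TopologicalSpace X] [TopologicalSpace Y]
    [CompactSpace X] [CompactSpace Y]
    [TopologicalSpace.MetrizableSpace X] [TopologicalSpace.MetrizableSpace Y]
    (A : Set X) (B : Set Y) (hA : IsClosed A) (hB : IsClosed B)
    (hdense : Dense (Aᶜ : Set X))
    (f : X → Y) (hf : Continuous f) (hmap : Set.MapsTo f Aᶜ Bᶜ) :
    [ (∀ K : Set (Bᶜ : Set Y), IsCompact K → IsCompact (hmap.restrict f Aᶜ Bᶜ ⁻¹' K)),
      A ⊆ f ⁻¹' B,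
      f ⁻¹' Bᶜ ⊆ Aᶜ,
      (∀ p : ℕ → (Aᶜ : Set X),
        Filter.Tendsto p Filter.atTop (Filter.cocompact (Aᶜ : Set X)) →
        Filter.Tendsto (hmap.restrict f Aᶜ Bᶜ ∘ p) Filter.atTop
          (Filter.cocompact (Bᶜ : Set Y))) ].TFAE := by
  haveI : T2Space X := TopologicalSpace.t2Space_of_metrizableSpace
  haveI : T2Space Y := TopologicalSpace.t2Space_of_metrizableSpace
  set g := hmap.restrict f Aᶜ Bᶜ with hg
  tfae_have 2 → 3 := by
    intro h2 x hx hxA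
    exact hx (h2 hxA)
  tfae_have 3 → 2 := by
    intro h3 x hx
    by_contra hB'
    exact (h3 hB') hx
  tfae_have 3 → 1 := by
    intro h3 K hK
    rw [Topology.IsEmbedding.subtypeVal.isCompact_iff]
    have hKY : IsCompact (Subtype.val '' K) := hK.image continuous_subtype_val
    have : Subtype.val '' (g ⁻¹' K) = f ⁻¹' (Subtype.val '' K) := by
      ext x
      constructor
      · rintro ⟨⟨x, hxA⟩, hxK, rfl⟩
        exact ⟨g ⟨x, hxA⟩, hxK, rfl⟩
      · rintro ⟨y, hyK, hyx⟩
        have hxB : f x ∈ (Bᶜ : Set Y) := hyx ▸ y.2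
        have hxA : x ∈ (Aᶜ : Set X) := h3 hxB
        refine ⟨⟨x, hxA⟩, ?_, rfl⟩
        have : g ⟨x, hxA⟩ = y := Subtype.ext hyx.symm
        show g ⟨x, hxA⟩ ∈ K
        rw [this]; exact hyK
    rw [this]
    exact (hKY.isClosed.preimage hf).isCompact
  tfae_have 1 → 4 := by
    intro h1 p hp
    rw [hasBasis_cocompact.tendsto_right_iff] at hp ⊢
    intro K hK
    filter_upwards [hp _ (h1 K hK)] with n hn hmem
    exact hn hmem
  tfae_have 4 → 3 := by
    intro h4
    by_contra h3
    rw [Set.not_subset] at h3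
    obtain ⟨x, hxB, hxA⟩ := h3
    have hxcl : x ∈ closure (Aᶜ : Set X) := hdense x
    rw [mem_closure_iff_seq_limit] at hxcl
    obtain ⟨u, hu_mem, hu_lim⟩ := hxcl
    set p : ℕ → (Aᶜ : Set X) := fun n => ⟨u n, hu_mem n⟩ with hp
    have hpco : Filter.Tendsto p Filter.atTop (Filter.cocompact (Aᶜ : Set X)) := by
      rw [hasBasis_cocompact.tendsto_right_iff]
      intro K hK
      have hKY : IsCompact (Subtype.val '' K) := hK.image continuous_subtype_val
      have hx_not : x ∉ Subtype.val '' K := by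
        rintro ⟨⟨y, hyA⟩, _, rfl⟩
        exact hxA hyA
      have : ∀ᶠ n in atTop, u n ∈ (Subtype.val '' K)ᶜ :=
        hu_lim (hKY.isClosed.isOpen_compl.mem_nhds hx_not)
      filter_upwards [this] with n hn hmem
      exact hn ⟨p n, hmem, rfl⟩
    have h5 := h4 p hpco
    -- but g ∘ p converges to ⟨f x, hxB⟩ in Bᶜ
    have hlim : Filter.Tendsto (g ∘ p) Filter.atTop (𝓝 (⟨f x, hxB⟩ : (Bᶜ : Set Y))) := by
      rw [tendsto_subtype_rng]
      exact (hf.tendsto x).comp hu_lim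
    haveI : LocallyCompactSpace ((Bᶜ : Set Y)) := hB.isOpen_compl.locallyCompactSpace
    obtain ⟨K, hKc, hKn⟩ := exists_compact_mem_nhds (⟨f x, hxB⟩ : (Bᶜ : Set Y))
    have h6 : ∀ᶠ n in atTop, (g ∘ p) n ∈ Kᶜ :=
      (hasBasis_cocompact.tendsto_right_iff.mp h5) K hKc
    have h7 : ∀ᶠ n in atTop, (g ∘ p) n ∈ K := hlim (hKn)
    obtain ⟨n, hn1, hn2⟩ := (h6.and h7).exists
    exact hn1 hn2
  tfae_finish
end

section
/- Let V_0 and V_1 be finite-dimensional complex vector spaces, and for i ∈ {0,1} let b_i, B_i : V_i → V_{1−i} be linear maps satisfying b_{1−i} ∘ b_i = 0, B_{1−i} ∘ B_i = 0, and b_{1−i} ∘ B_i + B_{1−i} ∘ b_i = 0 (a two-periodic mixed complex). Let K = ℂ((u)) be the field of formal Laurent series, and define K-linear maps D_i : V_i ⊗_ℂ K → V_{1−i} ⊗_ℂ K by D_i(v ⊗ f) = (b_i v) ⊗ f + (B_i v) ⊗ (u·f). Then D_{1−i} ∘ D_i = 0, and dim_K( ker D_0 / im D_1 ) ≤ dim_ℂ(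 ker b_0 / im b_1 ). -/
open scoped TensorProduct

set_option maxHeartbeats 1000000
set_option synthInstance.maxHeartbeats 400000

/- Shortcut instances, to help typeclass resolution with the field `K = ℂ((u))` and
base changes `K ⊗_ℂ V` along it.  (These are all proved, not assumed.) -/
noncomputable instance (priority := 5000) : Field (LaurentSeries ℂ) := inferInstance
noncomputable instance (priority := 5000) : Ring (LaurentSeries ℂ) := inferInstance
noncomputable instance (priority := 5000) : AddCommGroup (LaurentSeries ℂ) := inferInstance
noncomputable instance (priority := 5000) : AddCommMonoid (LaurentSeries ℂ) :=
  NonUnitalNonAssocSemiring.toAddCommMonoid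
noncomputable instance (priority := 5000) : Algebra ℂ (LaurentSeries ℂ) := inferInstance
noncomputable instance (priority := 5000) : SMul ℂ (LaurentSeries ℂ) := Algebra.toSMul
noncomputable instance (priority := 5000) : Module ℂ (LaurentSeries ℂ) := Algebra.toModule
noncomputable instance (priority := 5000) :
    Module (LaurentSeries ℂ) (LaurentSeries ℂ) := Semiring.toModule

/-- Scalars `ℂ` commute with multiplication in the Laurent series field `K = ℂ((u))`. -/
noncomputable instance : SMulCommClass ℂ (LaurentSeries ℂ) (LaurentSeries ℂ) :=
  Algebra.to_smulCommClass
noncomputable instance (priority := 5000) {V : Type*} [AddCommGroup V] [Module ℂ V] :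
    AddCommGroup ((LaurentSeries ℂ) ⊗[ℂ] V) := inferInstance
noncomputable instance (priority := 5000) {V : Type*} [AddCommGroup V] [Module ℂ V] :
    Module (LaurentSeries ℂ) ((LaurentSeries ℂ) ⊗[ℂ] V) := TensorProduct.leftModule

/-- The variable `u` of the Laurent series field `K = ℂ((u))`. -/
noncomputable def uVar : LaurentSeries ℂ := HahnSeries.single (1 : ℤ) (1 : ℂ)

/-- The periodic differential `D(f ⊗ v) = f ⊗ b v + (u·f) ⊗ B v` on the base change to
`K = ℂ((u))` of one stage of a two-periodic mixed complex `(b, B)`. -/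
noncomputable def periodicDiff {V W : Type*} [AddCommGroup V] [AddCommGroup W]
    [Module ℂ V] [Module ℂ W] (b B : V →ₗ[ℂ] W) :
    (LaurentSeries ℂ) ⊗[ℂ] V →ₗ[LaurentSeries ℂ] (LaurentSeries ℂ) ⊗[ℂ] W :=
  LinearMap.baseChange (LaurentSeries ℂ) b + uVar • LinearMap.baseChange (LaurentSeries ℂ) B


section Aux

local notation "K" => LaurentSeries ℂ

open Module

/-- coefficient extraction as a ℂ-linear map -/
noncomputable def coeffL (n : ℤ) : K →ₗ[ℂ] ℂ where
  toFun f := f.coeff n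
  map_add' f g := by simp
  map_smul' c f := by
    simp only [RingHom.id_apply]
    rw [Algebra.smul_def, HahnSeries.algebraMap_apply', ← PowerSeries.C_eq_algebraMap,
      HahnSeries.ofPowerSeries_C, HahnSeries.C_apply, HahnSeries.coeff_single_zero_mul,
      smul_eq_mul]

noncomputable def coeffT {V : Type*} [AddCommGroup V] [Module ℂ V] (n : ℤ) :
    K ⊗[ℂ] V →ₗ[ℂ] V :=
  TensorProduct.lift ((LinearMap.lsmul ℂ V).comp (coeffL n))

@[simp] lemma coeffT_tmul {V : Type*} [AddCommGroup V] [Module ℂ V] (n : ℤ)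
    (f : K) (v : V) : coeffT n (f ⊗ₜ v) = f.coeff n • v := rfl

lemma coeffT_baseChange {V W : Type*} [AddCommGroup V] [AddCommGroup W]
    [Module ℂ V] [Module ℂ W] (b : V →ₗ[ℂ] W) (n : ℤ) (x : K ⊗[ℂ] V) :
    coeffT n (LinearMap.baseChange K b x) = b (coeffT n x) := by
  induction x using TensorProduct.induction_on with
  | zero => simp
  | tmul f v => simp
  | add x y hx hy => simp [map_add, hx, hy]

lemma coeffT_usmul {V : Type*} [AddCommGroup V] [Module ℂ V] (n : ℤ)
    (x : K ⊗[ℂ] V) : coeffT n (uVar • x) = coeffT (n - 1) x := by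
  induction x using TensorProduct.induction_on with
  | zero => simp
  | tmul f v =>
      rw [TensorProduct.smul_tmul', coeffT_tmul, coeffT_tmul]
      have huf : (uVar • f) = uVar * f := rfl
      have : (uVar * f).coeff n = f.coeff (n - 1) := by
        have h := HahnSeries.coeff_single_mul_add (r := (1:ℂ)) (x := f) (a := n - 1) (b := 1)
        simpa [uVar] using h
      rw [huf, this]
  | add x y hx hy => simp only [smul_add, map_add, hx, hy]

/-- For a nonzero element of the base change there is a minimal coefficient index. -/
lemma exists_min_coeffT {V : Type*} [AddCommGroup V] [Module ℂ V] [FiniteDimensional ℂ V]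
    {x : K ⊗[ℂ] V} (hx : x ≠ 0) :
    ∃ n : ℤ, coeffT n x ≠ 0 ∧ ∀ m < n, coeffT m x = 0 := by
  classical
  set s := Module.Free.ChooseBasisIndex ℂ V with hs
  set e : Basis s ℂ V := Module.Free.chooseBasis ℂ V with he
  set bK := e.baseChange K with hbK
  set c : s → K := fun j => bK.repr x j with hc
  have hxsum : x = ∑ j, c j • bK j := (bK.sum_repr x).symm
  have hcoeff : ∀ n : ℤ, coeffT n x = ∑ j, (c j).coeff n • e j := by
    intro n
    conv_lhs => rw [hxsum]
    rw [map_sum]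
    refine Finset.sum_congr rfl fun j _ => ?_
    have h1 : c j • bK j = (c j) ⊗ₜ[ℂ] (e j) := by
      rw [Basis.baseChange_apply]
      rw [TensorProduct.smul_tmul']
      norm_num
    rw [h1, coeffT_tmul]
  have hxne : ∃ j, c j ≠ 0 := by
    by_contra h
    push_neg at h
    apply hx
    rw [hxsum]
    simp [h]
  obtain ⟨j₀, hj₀⟩ := hxne
  set J : Finset s := Finset.univ.filter (fun j => c j ≠ 0) with hJ
  have hJne : ((J.image (fun j => (c j).order))).Nonempty := by
    exact ⟨(c j₀).order, Finset.mem_image_of_mem _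
      (Finset.mem_filter.mpr ⟨Finset.mem_univ _, hj₀⟩)⟩
  set n := (J.image (fun j => (c j).order)).min' hJne with hn
  obtain ⟨j₁, hj₁J, hj₁⟩ := Finset.mem_image.mp ((J.image (fun j => (c j).order)).min'_mem hJne)
  have hj₁ne : c j₁ ≠ 0 := (Finset.mem_filter.mp hj₁J).2
  refine ⟨n, ?_, ?_⟩
  · rw [hcoeff]
    intro hzero
    have hli := e.linearIndependent
    rw [Fintype.linearIndependent_iff] at hli
    have hcz := hli (fun j => (c j).coeff n) hzero j₁
    have horder : (c j₁).order = n := by rw [hn]; exact hj₁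
    exact (HahnSeries.coeff_order_eq_zero.not.mpr hj₁ne) (horder ▸ hcz)
  · intro m hm
    rw [hcoeff]
    refine Finset.sum_eq_zero fun j _ => ?_
    rcases eq_or_ne (c j) 0 with h | h
    · simp [h]
    · have hjJ : j ∈ J := Finset.mem_filter.mpr ⟨Finset.mem_univ _, h⟩
      have : n ≤ (c j).order :=
        Finset.min'_le _ _ (Finset.mem_image_of_mem _ hjJ)
      rw [HahnSeries.coeff_eq_zero_of_lt_order (lt_of_lt_of_le hm this), zero_smul]

/-- Injectivity of the periodic differential on a complement of `ker b`. -/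
lemma periodicDiff_comp_inj {V W : Type*} [AddCommGroup V] [AddCommGroup W]
    [Module ℂ V] [Module ℂ W] [FiniteDimensional ℂ V] (b B : V →ₗ[ℂ] W)
    (U : Submodule ℂ V) (hU : U ⊓ LinearMap.ker b = ⊥) :
    Function.Injective
      ((periodicDiff b B) ∘ₗ (LinearMap.baseChange K U.subtype)) := by
  rw [← LinearMap.ker_eq_bot]
  rw [Submodule.eq_bot_iff]
  intro x hxmem
  by_contra hx
  obtain ⟨n, hn, hmin⟩ := exists_min_coeffT hx
  have hDx : (periodicDiff b B) (LinearMap.baseChange K U.subtype x) = 0 := hxmem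
  have hcoeffn : coeffT n ((periodicDiff b B) (LinearMap.baseChange K U.subtype x)) =
      b (U.subtype (coeffT n x)) + B (U.subtype (coeffT (n - 1) x)) := by
    rw [periodicDiff]
    rw [LinearMap.add_apply, map_add, LinearMap.smul_apply]
    rw [coeffT_baseChange, coeffT_usmul, coeffT_baseChange]
    rw [coeffT_baseChange, coeffT_baseChange]
  rw [hDx] at hcoeffn
  have hlow : coeffT (n - 1) x = 0 := hmin _ (by omega)
  rw [hlow] at hcoeffn
  simp only [map_zero, add_zero] at hcoeffn
  have hker : (U.subtype (coeffT n x)) ∈ U ⊓ LinearMap.ker b := by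
    refine ⟨(coeffT n x).2, ?_⟩
    simpa using hcoeffn.symm
  rw [hU] at hker
  exact hn (by simpa using Submodule.mem_bot ℂ |>.mp hker)

/-- The rank over `K` of the periodic differential dominates the rank of `b`. -/
lemma rank_b_le_rank_periodicDiff {V W : Type*} [AddCommGroup V] [AddCommGroup W]
    [Module ℂ V] [Module ℂ W] [FiniteDimensional ℂ V] [FiniteDimensional ℂ W]
    (b B : V →ₗ[ℂ] W) :
    finrank ℂ (LinearMap.range b) ≤ finrank K (LinearMap.range (periodicDiff b B)) := by
  obtain ⟨U, hcompl⟩ := Submodule.exists_isCompl (LinearMap.ker b)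
  have hinf : U ⊓ LinearMap.ker b = ⊥ := hcompl.symm.inf_eq_bot
  have hinj := periodicDiff_comp_inj b B U hinf
  have h1 : finrank ℂ (LinearMap.range b) = finrank ℂ U := by
    have h2 := LinearMap.finrank_range_add_finrank_ker b
    have h3 := Submodule.finrank_add_eq_of_isCompl hcompl.symm
    omega
  haveI : FiniteDimensional K (K ⊗[ℂ] W) := Module.Finite.base_change ℂ K W
  have h4 : finrank K
      (LinearMap.range ((periodicDiff b B) ∘ₗ (LinearMap.baseChange K U.subtype)))
      ≤ finrank K (LinearMap.range (periodicDiff b B)) :=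
    Submodule.finrank_mono (LinearMap.range_comp_le_range _ _)
  have h5 : finrank K
      (LinearMap.range ((periodicDiff b B) ∘ₗ (LinearMap.baseChange K U.subtype)))
      = finrank K (K ⊗[ℂ] U) := LinearMap.finrank_range_of_inj hinj
  have h6 : finrank K (K ⊗[ℂ] U) = finrank ℂ U := Module.finrank_baseChange
  omega

/-- The periodic differentials compose to zero. -/
lemma periodicDiff_comp_eq_zero {V W : Type*} [AddCommGroup V] [AddCommGroup W]
    [Module ℂ V] [Module ℂ W] (b B : V →ₗ[ℂ] W) (b' B' : W →ₗ[ℂ] V)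
    (h1 : b' ∘ₗ b = 0) (h2 : B' ∘ₗ B = 0) (h3 : b' ∘ₗ B + B' ∘ₗ b = 0) :
    periodicDiff b' B' ∘ₗ periodicDiff b B = 0 := by
  rw [periodicDiff, periodicDiff]
  rw [LinearMap.add_comp, LinearMap.comp_add, LinearMap.comp_add]
  rw [LinearMap.comp_smul, LinearMap.smul_comp, LinearMap.smul_comp, LinearMap.comp_smul]
  rw [← LinearMap.baseChange_comp, ← LinearMap.baseChange_comp,
    ← LinearMap.baseChange_comp, ← LinearMap.baseChange_comp]
  rw [h1, h2, LinearMap.baseChange_zero]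
  have hmix : uVar • LinearMap.baseChange K (b' ∘ₗ B)
      + uVar • LinearMap.baseChange K (B' ∘ₗ b) = 0 := by
    rw [← smul_add, ← LinearMap.baseChange_add, h3, LinearMap.baseChange_zero, smul_zero]
  simp only [smul_zero, zero_add, add_zero]
  exact hmix

end Aux

/-- **Semicontinuity of periodic cyclic cohomology of a two-periodic mixed complex.**
Let `V₀, V₁` be finite-dimensional complex vector spaces and `b_i, B_i : V_i → V_{1-i}`
linear maps with `b_{1-i} ∘ b_i = 0`, `B_{1-i} ∘ B_i = 0`, and
`b_{1-i} ∘ B_i + B_{1-i} ∘ b_i = 0` (a two-periodic mixed complex).  Over the field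
`K = ℂ((u))` of formal Laurent series, the `K`-linear maps
`D_i : K ⊗_ℂ V_i → K ⊗_ℂ V_{1-i}`, `D_i(f ⊗ v) = f ⊗ b_i v + (u·f) ⊗ B_i v`, satisfy
`D_{1-i} ∘ D_i = 0`, and `dim_K (ker D₀ / im D₁) ≤ dim_ℂ (ker b₀ / im b₁)`. -/
theorem periodic_cyclic_dimension_le_mixed_complex_cohomology_dimension
    {V₀ V₁ : Type*} [AddCommGroup V₀] [AddCommGroup V₁]
    [Module ℂ V₀] [Module ℂ V₁] [FiniteDimensional ℂ V₀] [FiniteDimensional ℂ V₁]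
    (b₀ B₀ : V₀ →ₗ[ℂ] V₁) (b₁ B₁ : V₁ →ₗ[ℂ] V₀)
    (hb₀ : b₁ ∘ₗ b₀ = 0) (hb₁ : b₀ ∘ₗ b₁ = 0)
    (hB₀ : B₁ ∘ₗ B₀ = 0) (hB₁ : B₀ ∘ₗ B₁ = 0)
    (hbB₀ : b₁ ∘ₗ B₀ + B₁ ∘ₗ b₀ = 0) (hbB₁ : b₀ ∘ₗ B₁ + B₀ ∘ₗ b₁ = 0) :
    periodicDiff b₁ B₁ ∘ₗ periodicDiff b₀ B₀ = 0 ∧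
      Module.finrank (LaurentSeries ℂ)
          (↥(LinearMap.ker (periodicDiff b₀ B₀)) ⧸
            (LinearMap.range (periodicDiff b₁ B₁)).comap
              (LinearMap.ker (periodicDiff b₀ B₀)).subtype) ≤
        Module.finrank ℂ
          (↥(LinearMap.ker b₀) ⧸
            (LinearMap.range b₁).comap (LinearMap.ker b₀).subtype) := by
  classical
  have hDD : periodicDiff b₁ B₁ ∘ₗ periodicDiff b₀ B₀ = 0 :=
    periodicDiff_comp_eq_zero b₀ B₀ b₁ B₁ hb₀ hB₀ hbB₀
  have hDD' : periodicDiff b₀ B₀ ∘ₗ periodicDiff b₁ B₁ = 0 :=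
    periodicDiff_comp_eq_zero b₁ B₁ b₀ B₀ hb₁ hB₁ hbB₁
  refine ⟨hDD, ?_⟩
  haveI : FiniteDimensional (LaurentSeries ℂ) ((LaurentSeries ℂ) ⊗[ℂ] V₀) :=
    Module.Finite.base_change ℂ (LaurentSeries ℂ) V₀
  haveI : FiniteDimensional (LaurentSeries ℂ) ((LaurentSeries ℂ) ⊗[ℂ] V₁) :=
    Module.Finite.base_change ℂ (LaurentSeries ℂ) V₁
  have hle : LinearMap.range (periodicDiff b₁ B₁) ≤ LinearMap.ker (periodicDiff b₀ B₀) := by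
    rintro _ ⟨y, rfl⟩
    exact LinearMap.congr_fun hDD' y
  have hleC : LinearMap.range b₁ ≤ LinearMap.ker b₀ := by
    rintro _ ⟨y, rfl⟩
    exact LinearMap.congr_fun hb₁ y
  have h2 : Module.finrank (LaurentSeries ℂ)
        (↥(LinearMap.ker (periodicDiff b₀ B₀)) ⧸
          (LinearMap.range (periodicDiff b₁ B₁)).comap
            (LinearMap.ker (periodicDiff b₀ B₀)).subtype)
      + Module.finrank (LaurentSeries ℂ)
        ((LinearMap.range (periodicDiff b₁ B₁)).comap
            (LinearMap.ker (periodicDiff b₀ B₀)).subtype)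
      = Module.finrank (LaurentSeries ℂ) (LinearMap.ker (periodicDiff b₀ B₀)) :=
    Submodule.finrank_quotient_add_finrank _
  have h3 : Module.finrank (LaurentSeries ℂ)
        ((LinearMap.range (periodicDiff b₁ B₁)).comap
            (LinearMap.ker (periodicDiff b₀ B₀)).subtype)
      = Module.finrank (LaurentSeries ℂ) (LinearMap.range (periodicDiff b₁ B₁)) :=
    LinearEquiv.finrank_eq (Submodule.comapSubtypeEquivOfLe hle)
  have h1 : Module.finrank (LaurentSeries ℂ) (LinearMap.range (periodicDiff b₀ B₀))
      + Module.finrank (LaurentSeries ℂ) (LinearMap.ker (periodicDiff b₀ B₀))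
      = Module.finrank ℂ V₀ := by
    rw [LinearMap.finrank_range_add_finrank_ker (periodicDiff b₀ B₀)]
    exact Module.finrank_baseChange
  have hc2 : Module.finrank ℂ
        (↥(LinearMap.ker b₀) ⧸ (LinearMap.range b₁).comap (LinearMap.ker b₀).subtype)
      + Module.finrank ℂ ((LinearMap.range b₁).comap (LinearMap.ker b₀).subtype)
      = Module.finrank ℂ (LinearMap.ker b₀) :=
    Submodule.finrank_quotient_add_finrank _
  have hc3 : Module.finrank ℂ ((LinearMap.range b₁).comap (LinearMap.ker b₀).subtype)
      = Module.finrank ℂ (LinearMap.range b₁) :=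
    LinearEquiv.finrank_eq (Submodule.comapSubtypeEquivOfLe hleC)
  have hc1 : Module.finrank ℂ (LinearMap.range b₀) + Module.finrank ℂ (LinearMap.ker b₀)
      = Module.finrank ℂ V₀ := LinearMap.finrank_range_add_finrank_ker b₀
  have h4 := rank_b_le_rank_periodicDiff b₀ B₀
  have h5 := rank_b_le_rank_periodicDiff b₁ B₁
  omega
end

section
/- Let g be a finite-dimensional Lie algebra over ℂ. Then the following are equivalent: (1) g is degenerate, i.e. for all x, y, z ∈ g the symmetrized element ⁅x,y⁆⊗z + z⊗⁅x,y⁆ + ⁅y,z⁆⊗x + x⊗⁅y,z⁆ + ⁅z,x⁆⊗y + y⊗⁅z,x⁆ vanishes in g ⊗_ℂ g (equivalently, ⁅x,y⁆·z + ⁅y,z⁆·x + ⁅z,x⁆·y = 0 in the symmetric square Sym²(g)); (2) either g is abelian, or g has a basis e_1, …, e_{n−1}, f such that ⁅f, e_i⁆ = e_i for all i and ⁅e_i, e_j⁆ = 0 for all i, j. -/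
/-!
Testing the degeneracy identity on `x, y, ⁅x, y⁆` against `ψ ⊗ ψ`, for a functional `ψ` killing
`x` and `y`, gives `2 ψ(⁅x, y⁆)² = 0`; so every bracket `⁅x, y⁆` lies in `span {x, y}`. Then `ad x`
acts on `g ⧸ ℂ ∙ x` with every vector an eigenvector, hence as a scalar `φ x`, and comparing
`⁅x, y⁆` with `-⁅y, x⁆` and using bilinearity shows that `φ` is linear with
`⁅x, y⁆ = φ x • y - φ y • x`. Brackets of this shape are degenerate; they are the abelian ones
(`φ = 0`) and those given by a basis of `ker φ` followed by some `f` with `φ f = 1`.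
-/

open scoped TensorProduct
open Module Submodule

namespace LinearMap

variable {K V : Type*} [Field K] [AddCommGroup V] [Module K V] {B : V →ₗ[K] V →ₗ[K] V}

theorem exists_forall_sub_smul_mem_span_singleton (hB : ∀ x y, B x y ∈ span K {x, y}) (x : V) :
    ∃ c : K, ∀ y, B x y - c • y ∈ K ∙ x := by
  have hx : K ∙ x ≤ (K ∙ x).comap (B x) := span_le.mpr <| by simpa using hB x x
  obtain ⟨c, hc⟩ := exists_eq_smul_id_of_forall_notLinearIndependent
    (f := (K ∙ x).mapQ (K ∙ x) (B x) hx) <| by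
    intro v hind
    obtain ⟨y, rfl⟩ := Submodule.Quotient.mk_surjective _ v
    obtain ⟨a, b, hab⟩ := mem_span_pair.mp (hB x y)
    refine one_ne_zero (neg_eq_zero.mp (LinearIndependent.pair_iff.mp hind b (-1) ?_).2)
    rw [mapQ_apply, ← hab, neg_one_smul, Quotient.mk_add, Quotient.mk_smul, Quotient.mk_smul,
      (Quotient.mk_eq_zero _).mpr (mem_span_singleton_self x)]
    simp
  refine ⟨c, fun y => (Submodule.Quotient.eq _).mp ?_⟩
  simpa using LinearMap.congr_fun hc (Submodule.Quotient.mk y)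

theorem eq_of_sub_smul_mem_span_singleton {x y w : V} (hy : y ∉ K ∙ x) {c c' : K}
    (h : w - c • y ∈ K ∙ x) (h' : w - c' • y ∈ K ∙ x) : c = c' := by
  by_contra hne
  refine hy ((smul_mem_iff _ (sub_ne_zero.mpr (Ne.symm hne))).mp ?_)
  simpa [sub_smul] using sub_mem h h'

theorem eq_smul_sub_smul_of_linearIndependent (hB : B.IsAlt) {x y : V}
    (hxy : LinearIndependent K ![x, y]) {c d : K}
    (hx : B x y - c • y ∈ K ∙ x) (hy : B y x - d • x ∈ K ∙ y) :
    B x y = c • y - d • x := by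
  obtain ⟨s, hs⟩ := mem_span_singleton.mp hx
  obtain ⟨t, ht⟩ := mem_span_singleton.mp hy
  have hskew := hB.neg x y
  obtain ⟨hsd, -⟩ := LinearIndependent.pair_iff.mp hxy (s + d) (t + c) <| by
    linear_combination (norm := module) hs + ht - hskew
  linear_combination (norm := module) -hs + hsd • x

theorem exists_eq_smul_sub_smul_of_mem_span_pair (hB : B.IsAlt)
    (hBs : ∀ x y, B x y ∈ span K {x, y}) :
    ∃ φ : Dual K V, ∀ x y, B x y = φ x • y - φ y • x := by
  by_cases hline : ∃ x : V, K ∙ x = ⊤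
  · obtain ⟨x, hx⟩ := hline
    refine ⟨0, fun u v => ?_⟩
    obtain ⟨a, rfl⟩ := mem_span_singleton.mp (hx ▸ mem_top : u ∈ K ∙ x)
    obtain ⟨b, rfl⟩ := mem_span_singleton.mp (hx ▸ mem_top : v ∈ K ∙ x)
    simp [hB.self_eq_zero x]
  push Not at hline
  have hout (x : V) : ∃ y, y ∉ K ∙ x := SetLike.exists_not_mem_of_ne_top _ (hline x)
  choose c hc using exists_forall_sub_smul_mem_span_singleton hBs
  have hsmul (t : K) (x : V) : c (t • x) = t * c x := by
    obtain ⟨y, hy⟩ := hout (t • x)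
    refine eq_of_sub_smul_mem_span_singleton hy (hc _ y) ?_
    obtain ⟨s, hs⟩ := mem_span_singleton.mp (hc x y)
    refine mem_span_singleton.mpr ⟨s, ?_⟩
    rw [smul_comm, hs, map_smul, smul_apply, mul_smul, smul_sub]
  have hformula (x y : V) : B x y = c x • y - c y • x := by
    by_cases hyx : y ∈ K ∙ x
    · obtain ⟨t, rfl⟩ := mem_span_singleton.mp hyx
      simp [hB.self_eq_zero x, hsmul, smul_smul, mul_comm]
    by_cases hxy : x ∈ K ∙ y
    · obtain ⟨t, rfl⟩ := mem_span_singleton.mp hxy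
      simp [hB.self_eq_zero y, hsmul, smul_smul, mul_comm]
    refine eq_smul_sub_smul_of_linearIndependent hB ?_ (hc x y) (hc y x)
    exact (LinearIndependent.pair_iff' fun hx => hxy (by simp [hx])).mpr
      fun a ha => hyx (mem_span_singleton.mpr ⟨a, ha⟩)
  obtain ⟨y, hy⟩ := hout 0
  have hy0 : y ≠ 0 := fun h => hy (by simp [h])
  have hadd (x x' : V) : c (x + x') = c x + c x' := by
    have h := map_add₂ B x x' y
    rw [hformula, hformula, hformula] at h
    have : (c (x + x') - c x - c x') • y = 0 := by linear_combination (norm := module) h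
    linear_combination (smul_eq_zero.mp this).resolve_right hy0
  exact ⟨⟨⟨c, hadd⟩, hsmul⟩, hformula⟩

end LinearMap

namespace LieAlgebra

def IsDegenerate (K L : Type*) [CommRing K] [LieRing L] [LieAlgebra K L] : Prop :=
  ∀ x y z : L, ⁅x, y⁆ ⊗ₜ[K] z + z ⊗ₜ[K] ⁅x, y⁆ + ⁅y, z⁆ ⊗ₜ[K] x + x ⊗ₜ[K] ⁅y, z⁆ +
    ⁅z, x⁆ ⊗ₜ[K] y + y ⊗ₜ[K] ⁅z, x⁆ = 0

variable {K L : Type*} [LieRing L]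

theorem isDegenerate_of_lie_eq_smul_sub_smul [CommRing K] [LieAlgebra K L] (φ : Dual K L)
    (hφ : ∀ x y : L, ⁅x, y⁆ = φ x • y - φ y • x) : IsDegenerate K L := by
  intro x y z
  simp only [hφ, TensorProduct.sub_tmul, TensorProduct.tmul_sub, TensorProduct.smul_tmul',
    TensorProduct.tmul_smul]
  module

theorem IsDegenerate.lie_mem_span_pair [Field K] [NeZero (2 : K)] [LieAlgebra K L]
    (h : IsDegenerate K L) (x y : L) : ⁅x, y⁆ ∈ span K {x, y} := by
  by_contra hxy
  obtain ⟨ψ, hψ, hle⟩ := exists_le_ker_of_notMem hxy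
  have hx : ψ x = 0 := hle (subset_span (by simp))
  have hy : ψ y = 0 := hle (subset_span (by simp))
  have := congr_arg (TensorProduct.lift ((LinearMap.mul K K).compl₁₂ ψ ψ)) (h x y ⁅x, y⁆)
  simp only [map_add, TensorProduct.lift.tmul, LinearMap.compl₁₂_apply, LinearMap.mul_apply', hx,
    hy, LinearMap.zero_apply, add_zero, map_zero] at this
  have h2 : (2 : K) * (ψ ⁅x, y⁆ * ψ ⁅x, y⁆) = 0 := by linear_combination this
  simp [hψ, two_ne_zero] at h2

theorem lie_eq_smul_sub_smul_of_basis [CommRing K] [LieAlgebra K L] {n : ℕ}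
    (b : Module.Basis (Fin (n + 1)) K L)
    (hf : ∀ i : Fin n, ⁅b (Fin.last n), b i.castSucc⁆ = b i.castSucc)
    (he : ∀ i j : Fin n, ⁅b i.castSucc, b j.castSucc⁆ = 0) (x y : L) :
    ⁅x, y⁆ = b.coord (Fin.last n) x • y - b.coord (Fin.last n) y • x := by
  set φ := b.coord (Fin.last n)
  have hf' (i : Fin n) : ⁅b i.castSucc, b (Fin.last n)⁆ = -b i.castSucc := by rw [← lie_skew, hf]
  have hbracket : (LieModule.toEnd K L L : L →ₗ[K] Module.End K L) =
      φ.smulRight LinearMap.id - LinearMap.smulRightₗ φ := by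
    refine LinearMap.ext_basis b b fun i j => ?_
    induction i using Fin.lastCases <;> induction j using Fin.lastCases <;>
      simp [φ, hf, hf', he, Fin.castSucc_ne_last]
  simpa [φ] using LinearMap.congr_fun₂ hbracket x y

theorem exists_basis_of_lie_eq_smul_sub_smul [Field K] [LieAlgebra K L] [FiniteDimensional K L]
    {φ : Dual K L} (hφ0 : φ ≠ 0) (hφ : ∀ x y : L, ⁅x, y⁆ = φ x • y - φ y • x) :
    ∃ (n : ℕ) (b : Module.Basis (Fin (n + 1)) K L),
      (∀ i : Fin n, ⁅b (Fin.last n), b i.castSucc⁆ = b i.castSucc) ∧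
      (∀ i j : Fin n, ⁅b i.castSucc, b j.castSucc⁆ = 0) := by
  obtain ⟨f, hf⟩ := LinearMap.surjective_of_ne_zero hφ0 1
  let b := Basis.mkFinSnoc (finBasis K (LinearMap.ker φ)) f
    (fun c x hx hcx => by simpa [hf, LinearMap.mem_ker.mp hx] using congr_arg φ hcx)
    (fun z => ⟨-φ z, by simp [hf]⟩)
  have hb : ∀ i, φ (b (Fin.castSucc i)) = 0 := fun i => by simp [b]
  refine ⟨_, b, fun i => ?_, fun i j => ?_⟩
  · rw [hφ, hb]; simp [b, hf]
  · rw [hφ, hb, hb, zero_smul, zero_smul, sub_zero]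

theorem isDegenerate_iff_exists_lie_eq_smul_sub_smul [Field K] [NeZero (2 : K)] [LieAlgebra K L] :
    IsDegenerate K L ↔ ∃ φ : Dual K L, ∀ x y : L, ⁅x, y⁆ = φ x • y - φ y • x :=
  ⟨fun h => LinearMap.exists_eq_smul_sub_smul_of_mem_span_pair
      (B := (LieModule.toEnd K L L : L →ₗ[K] Module.End K L)) lie_self h.lie_mem_span_pair,
    fun ⟨φ, hφ⟩ => isDegenerate_of_lie_eq_smul_sub_smul φ hφ⟩

theorem exists_lie_eq_smul_sub_smul_iff [Field K] [LieAlgebra K L] [FiniteDimensional K L] :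
    (∃ φ : Dual K L, ∀ x y : L, ⁅x, y⁆ = φ x • y - φ y • x) ↔
      IsLieAbelian L ∨ ∃ (n : ℕ) (b : Module.Basis (Fin (n + 1)) K L),
        (∀ i : Fin n, ⁅b (Fin.last n), b i.castSucc⁆ = b i.castSucc) ∧
        (∀ i j : Fin n, ⁅b i.castSucc, b j.castSucc⁆ = 0) := by
  constructor
  · rintro ⟨φ, hφ⟩
    rcases eq_or_ne φ 0 with rfl | hφ0
    · exact Or.inl ⟨fun x y => by simp [hφ x y]⟩
    · exact Or.inr (exists_basis_of_lie_eq_smul_sub_smul hφ0 hφ)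
  · rintro (hab | ⟨n, b, hf, he⟩)
    · exact ⟨0, fun x y => by simp [hab.trivial x y]⟩
    · exact ⟨_, lie_eq_smul_sub_smul_of_basis b hf he⟩

end LieAlgebra

/-- **Polishchuk's classification of degenerate Lie algebras.**
Let `g` be a finite-dimensional complex Lie algebra.  The following are equivalent:
(1) `g` is degenerate: for all `x, y, z ∈ g` the symmetrization of
    `⁅x,y⁆·z + ⁅y,z⁆·x + ⁅z,x⁆·y` vanishes in `g ⊗ g` (equivalently the element itself
    vanishes in `Sym²(g)`);
(2) either `g` is abelian, or `g` has a basis `e_1, …, e_{n-1}, f` with `⁅f, e_i⁆ = e_i`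
    for all `i` and `⁅e_i, e_j⁆ = 0` for all `i, j`. -/
theorem degenerate_lie_algebra_iff_abelian_or_almost_abelian
    {g : Type*} [LieRing g] [LieAlgebra ℂ g] [FiniteDimensional ℂ g] :
    (∀ x y z : g,
        ⁅x, y⁆ ⊗ₜ[ℂ] z + z ⊗ₜ[ℂ] ⁅x, y⁆ + ⁅y, z⁆ ⊗ₜ[ℂ] x + x ⊗ₜ[ℂ] ⁅y, z⁆ +
          ⁅z, x⁆ ⊗ₜ[ℂ] y + y ⊗ₜ[ℂ] ⁅z, x⁆ = (0 : g ⊗[ℂ] g)) ↔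
      (IsLieAbelian g ∨
        ∃ (n : ℕ) (B : Module.Basis (Fin (n + 1)) ℂ g),
          (∀ i : Fin n, ⁅B (Fin.last n), B i.castSucc⁆ = B i.castSucc) ∧
          (∀ i j : Fin n, ⁅B i.castSucc, B j.castSucc⁆ = 0)) :=
  LieAlgebra.isDegenerate_iff_exists_lie_eq_smul_sub_smul.trans
    LieAlgebra.exists_lie_eq_smul_sub_smul_iff
end
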